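/- arXiv:1504.06989 — 2 statements merged into one kernel-verified Lean document; each statement's English description precedes it below -/
import Mathlib

section
/- Let A ⊂ ℝ be a finite set with |A| = n^{1/2} ≥ 2 (n a perfect square) that is of SzT-type with parameter α = 2 and coefficient d > 0. Then there is an absolute constant C > 0 such that for every real k ≥ 1, the number of triples (a,b,c) ∈ A³ with |(A − a) ∩ (A − b) ∩ (A − c)| ≥ k is at most C · d² · n² · (log n) / k³. -/
open scoped Pointwise Classical

/-- `delta X Y s` is the number of representations of `s` as `x - y`, `x ∈ X`, `y ∈ Y`. -/
noncomputable def delta (X Y : Finset ℝ) (s : ℝ) : ℕ :=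
  ((X ×ˢ Y).filter fun p => p.1 - p.2 = s).card

/-- `X` is of Szemerédi–Trotter type with parameter `α = 2` and coefficient `d`. -/
def SzTType2 (X : Finset ℝ) (d : ℝ) : Prop :=
  ∀ (Y : Finset ℝ) (τ : ℝ), 1 ≤ τ →
    (((X - Y).filter fun s => τ ≤ (delta X Y s : ℝ)).card : ℝ)
      ≤ d * X.card * (Y.card : ℝ) ^ 2 / τ ^ 3

/-- The cardinality of `(A - a) ∩ (A - b) ∩ (A - c)`, realized as the set of
`z ∈ A - a` with `z + a, z + b, z + c ∈ A`. -/
noncomputable def tripleInterCard (A : Finset ℝ) (a b c : ℝ) : ℕ :=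
  (((A.image fun u => u - a).filter fun z =>
    z + a ∈ A ∧ z + b ∈ A ∧ z + c ∈ A)).card


/-!
For a pair `(a, b)` put `P = (A - a) ∩ (A - b)`; then `|P| = δ_{A,A}(a - b)` and
`|(A - a) ∩ (A - b) ∩ (A - c)| = δ_{A,P}(c)`. The SzT property with `Y = P` bounds the number of
`k`-rich `c` by `d |A| |P|² / k³`, so grouping the pairs by `s = a - b` bounds the count by
`(d |A| / k³) ∑_{δ(s) ≥ k} δ(s)³`. On each dyadic range `2ʲ k ≤ δ(s) < 2ʲ⁺¹ k` the SzT property with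
`Y = A` bounds this sum by `8 d |A|³`, and there are `O(log |A|)` ranges since `δ(s) ≤ |A|`.
-/

open Finset

lemma delta_eq_card_filter (X Y : Finset ℝ) (s : ℝ) :
    delta X Y s = #(Y.filter fun y => y + s ∈ X) := by
  refine card_nbij' Prod.snd (fun y => (y + s, y)) ?_ ?_ ?_ ?_
  · rintro ⟨x, y⟩ h
    simp only [coe_filter, mem_product, Set.mem_ofPred_eq] at h ⊢
    obtain ⟨⟨hx, hy⟩, rfl⟩ := h
    simpa using ⟨hy, hx⟩
  · intro y h
    simp only [coe_filter, Set.mem_ofPred_eq, mem_product] at h ⊢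
    exact ⟨⟨h.2, h.1⟩, by ring⟩
  · rintro ⟨x, y⟩ h
    simp only [coe_filter, mem_product, Set.mem_ofPred_eq] at h
    simp [← h.2]
  · intro y _
    rfl

lemma delta_le_card (X Y : Finset ℝ) (s : ℝ) : delta X Y s ≤ #Y := by
  rw [delta_eq_card_filter]
  exact card_filter_le _ _

lemma mem_sub_of_delta_ne_zero {X Y : Finset ℝ} {s : ℝ} (h : delta X Y s ≠ 0) : s ∈ X - Y := by
  obtain ⟨⟨x, y⟩, hxy⟩ := card_ne_zero.1 h
  simp only [mem_filter, mem_product] at hxy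
  exact mem_sub.2 ⟨x, hxy.1.1, y, hxy.1.2, hxy.2⟩

lemma sum_product_eq_sum_delta_mul (X Y : Finset ℝ) (g : ℝ → ℝ) :
    ∑ p ∈ X ×ˢ Y, g (p.1 - p.2) = ∑ s ∈ X - Y, (delta X Y s : ℝ) * g s := by
  rw [← sum_fiberwise_of_maps_to (g := fun p : ℝ × ℝ => p.1 - p.2) (t := X - Y)
    fun p hp => mem_sub.2 ⟨p.1, (mem_product.1 hp).1, p.2, (mem_product.1 hp).2, rfl⟩]
  refine sum_congr rfl fun s _ => ?_
  rw [sum_congr rfl fun p hp => congrArg g (mem_filter.1 hp).2, sum_const, nsmul_eq_mul, delta]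

/-- The set `(A - a) ∩ (A - b)`. -/
noncomputable def translateInter (A : Finset ℝ) (a b : ℝ) : Finset ℝ :=
  (A.image fun u => u - a).filter fun z => z + a ∈ A ∧ z + b ∈ A

lemma mem_translateInter {A : Finset ℝ} {a b z : ℝ} :
    z ∈ translateInter A a b ↔ z + a ∈ A ∧ z + b ∈ A := by
  simp only [translateInter, mem_filter, mem_image, and_iff_right_iff_imp]
  exact fun h => ⟨z + a, h.1, by ring⟩

lemma card_translateInter (A : Finset ℝ) (a b : ℝ) :
    #(translateInter A a b) = delta A A (a - b) := by
  rw [delta_eq_card_filter]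
  refine card_nbij' (· + b) (· - b) ?_ ?_ ?_ ?_ <;> intro z hz <;>
    simp only [coe_filter, Set.mem_ofPred_eq, mem_coe, mem_translateInter] at hz ⊢
  · exact ⟨hz.2, by rw [add_assoc, add_sub_cancel]; exact hz.1⟩
  · exact ⟨by rw [sub_add_eq_add_sub, add_sub_assoc]; exact hz.2, by simpa using hz.1⟩
  · simp
  · simp

lemma tripleInterCard_eq_delta (A : Finset ℝ) (a b c : ℝ) :
    tripleInterCard A a b c = delta A (translateInter A a b) c := by
  rw [delta_eq_card_filter, tripleInterCard, translateInter, filter_filter]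
  simp only [and_assoc]

lemma tripleInterCard_le (A : Finset ℝ) (a b c : ℝ) :
    tripleInterCard A a b c ≤ delta A A (a - b) := by
  rw [tripleInterCard_eq_delta, ← card_translateInter]
  exact delta_le_card _ _ _

lemma card_rich_completions_le {A : Finset ℝ} {d k : ℝ} (hSzT : SzTType2 A d)
    (hk : 1 ≤ k) (a b : ℝ) :
    (#(A.filter fun c => k ≤ (tripleInterCard A a b c : ℝ)) : ℝ)
      ≤ if k ≤ (delta A A (a - b) : ℝ) then d * #A * (delta A A (a - b) : ℝ) ^ 2 / k ^ 3
        else 0 := by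
  split_ifs with hab
  · have hsub : (A.filter fun c => k ≤ (tripleInterCard A a b c : ℝ)) ⊆
        (A - translateInter A a b).filter fun s => k ≤ (delta A (translateInter A a b) s : ℝ) := by
      intro c hc
      rw [mem_filter] at hc ⊢
      rw [← tripleInterCard_eq_delta]
      have hpos : (0 : ℝ) < tripleInterCard A a b c := by linarith [hc.2]
      refine ⟨mem_sub_of_delta_ne_zero ?_, hc.2⟩
      rw [← tripleInterCard_eq_delta]
      exact_mod_cast hpos.ne'
    calc (#(A.filter fun c => k ≤ (tripleInterCard A a b c : ℝ)) : ℝ)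
        ≤ #((A - translateInter A a b).filter
            fun s => k ≤ (delta A (translateInter A a b) s : ℝ)) := by
          exact_mod_cast card_le_card hsub
      _ ≤ d * #A * (#(translateInter A a b) : ℝ) ^ 2 / k ^ 3 := hSzT _ k hk
      _ = d * #A * (delta A A (a - b) : ℝ) ^ 2 / k ^ 3 := by rw [card_translateInter]
  · have hempty : (A.filter fun c => k ≤ (tripleInterCard A a b c : ℝ)) = ∅ :=
      filter_eq_empty_iff.2 fun c _ hc =>
        hab (hc.trans (by exact_mod_cast tripleInterCard_le A a b c))
    simp [hempty]

lemma card_rich_triples_le {A : Finset ℝ} {d k : ℝ} (hSzT : SzTType2 A d) (hk : 1 ≤ k) :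
    (#((A ×ˢ A ×ˢ A).filter fun t => k ≤ (tripleInterCard A t.1 t.2.1 t.2.2 : ℝ)) : ℝ)
      ≤ d * #A / k ^ 3 * ∑ s ∈ (A - A).filter (fun s => k ≤ (delta A A s : ℝ)),
          (delta A A s : ℝ) ^ 3 := by
  set g : ℝ → ℝ := fun s =>
    if k ≤ (delta A A s : ℝ) then d * #A * (delta A A s : ℝ) ^ 2 / k ^ 3 else 0
  calc (#((A ×ˢ A ×ˢ A).filter fun t => k ≤ (tripleInterCard A t.1 t.2.1 t.2.2 : ℝ)) : ℝ)
      = ∑ p ∈ A ×ˢ A, (#(A.filter fun c => k ≤ (tripleInterCard A p.1 p.2 c : ℝ)) : ℝ) := by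
        rw [card_filter, sum_product]
        simp_rw [sum_product, card_filter]
        push_cast
        rfl
    _ ≤ ∑ p ∈ A ×ˢ A, g (p.1 - p.2) :=
        sum_le_sum fun p _ => card_rich_completions_le hSzT hk p.1 p.2
    _ = ∑ s ∈ A - A, (delta A A s : ℝ) * g s := sum_product_eq_sum_delta_mul A A g
    _ = _ := by
        rw [mul_sum, sum_filter]
        refine sum_congr rfl fun s _ => ?_
        simp only [g]
        split_ifs <;> ring

lemma cube_le_eight_mul_sum_dyadic {x k : ℝ} (hk : 0 < k) (hkx : k ≤ x) :
    ∀ J : ℕ, x < 2 ^ (J + 1) * k →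
      x ^ 3 ≤ 8 * ∑ j ∈ range (J + 1), if 2 ^ j * k ≤ x then (2 ^ j * k) ^ 3 else 0 := by
  have top {y : ℝ} (hyx : y ≤ x) (hxy : x < 2 * y) : x ^ 3 ≤ 8 * y ^ 3 := by
    nlinarith [pow_le_pow_left₀ (hk.le.trans hkx) hxy.le 3]
  have term_nonneg (j : ℕ) : 0 ≤ if 2 ^ j * k ≤ x then (2 ^ j * k) ^ 3 else 0 := by
    split_ifs <;> positivity
  intro J
  induction J with
  | zero =>
    intro hx
    simpa [hkx] using top hkx (by simpa [mul_comm] using hx)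
  | succ J ih =>
    intro hx
    rw [sum_range_succ]
    by_cases hJ : x < 2 ^ (J + 1) * k
    · linarith [ih hJ, term_nonneg (J + 1)]
    · rw [not_lt] at hJ
      have hsum := sum_nonneg fun j (_ : j ∈ range (J + 1)) => term_nonneg j
      rw [if_pos hJ]
      linarith [top hJ (by rw [← mul_assoc, ← pow_succ']; exact hx)]

lemma sum_cube_le_of_card_le {ι : Type*} (S : Finset ι) (f : ι → ℝ) {k K : ℝ} (J : ℕ)
    (hk : 0 < k) (hf : ∀ s ∈ S, f s < 2 ^ (J + 1) * k)
    (hK : ∀ j ∈ range (J + 1), (2 ^ j * k) ^ 3 * #(S.filter fun s => 2 ^ j * k ≤ f s) ≤ K) :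
    ∑ s ∈ S.filter (fun s => k ≤ f s), f s ^ 3 ≤ 8 * (J + 1) * K := by
  calc ∑ s ∈ S.filter (fun s => k ≤ f s), f s ^ 3
      ≤ ∑ s ∈ S.filter (fun s => k ≤ f s), 8 * ∑ j ∈ range (J + 1),
          if 2 ^ j * k ≤ f s then (2 ^ j * k) ^ 3 else 0 := by
        refine sum_le_sum fun s hs => ?_
        rw [mem_filter] at hs
        exact cube_le_eight_mul_sum_dyadic hk hs.2 J (hf s hs.1)
    _ ≤ ∑ s ∈ S, 8 * ∑ j ∈ range (J + 1),
          if 2 ^ j * k ≤ f s then (2 ^ j * k) ^ 3 else 0 := by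
        refine sum_le_sum_of_subset_of_nonneg (filter_subset _ _) fun s _ _ => ?_
        refine mul_nonneg (by norm_num) (sum_nonneg fun j _ => ?_)
        split_ifs <;> positivity
    _ = 8 * ∑ j ∈ range (J + 1), (2 ^ j * k) ^ 3 * #(S.filter fun s => 2 ^ j * k ≤ f s) := by
        rw [← mul_sum, sum_comm]
        congr 1
        refine sum_congr rfl fun j _ => ?_
        rw [← sum_filter, sum_const, nsmul_eq_mul, mul_comm]
    _ ≤ 8 * ∑ _j ∈ range (J + 1), K := by gcongr with j hj; exact hK j hj
    _ = 8 * (J + 1) * K := by simp [mul_assoc]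

lemma sum_delta_cube_le {A : Finset ℝ} {d k : ℝ} (hSzT : SzTType2 A d) (hk : 1 ≤ k) :
    ∑ s ∈ (A - A).filter (fun s => k ≤ (delta A A s : ℝ)), (delta A A s : ℝ) ^ 3
      ≤ 8 * (Nat.log 2 #A + 1) * (d * #A ^ 3) := by
  refine sum_cube_le_of_card_le _ _ _ (by linarith) (fun s _ => ?_) fun j _ => ?_
  · have hlt : (#A : ℝ) < 2 ^ (Nat.log 2 #A + 1) := by
      exact_mod_cast Nat.lt_pow_succ_log_self one_lt_two #A
    calc (delta A A s : ℝ) ≤ #A := by exact_mod_cast delta_le_card A A s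
      _ < 2 ^ (Nat.log 2 #A + 1) := hlt
      _ ≤ 2 ^ (Nat.log 2 #A + 1) * k := le_mul_of_one_le_right (by positivity) hk
  · have hτ : 1 ≤ (2 : ℝ) ^ j * k := one_le_mul_of_one_le_of_one_le (one_le_pow₀ one_le_two) hk
    have h := hSzT A _ hτ
    rw [le_div_iff₀ (by positivity)] at h
    linarith

lemma natLog_two_add_one_le_three_mul_log {m : ℕ} (hm : 2 ≤ m) :
    (Nat.log 2 m : ℝ) + 1 ≤ 3 * Real.log m := by
  have hpow : ((2 : ℕ) ^ Nat.log 2 m : ℝ) ≤ m := by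
    exact_mod_cast Nat.pow_log_le_self 2 (by omega)
  have hJ : (Nat.log 2 m : ℝ) * Real.log 2 ≤ Real.log m := by
    rw [← Real.log_pow]
    exact Real.log_le_log (by positivity) (by exact_mod_cast hpow)
  have hlog2 : Real.log 2 ≤ Real.log m := Real.log_le_log two_pos (by exact_mod_cast hm)
  have := Real.log_two_gt_d9
  refine le_of_mul_le_mul_right ?_ (Real.log_pos one_lt_two)
  nlinarith

theorem rich_points_of_SzT_type :
    ∃ C : ℝ, 0 < C ∧ ∀ (n m : ℕ) (A : Finset ℝ) (d k : ℝ),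
      n = m ^ 2 → A.card = m → 2 ≤ m → 0 < d → SzTType2 A d → 1 ≤ k →
      (((A ×ˢ A ×ˢ A).filter fun t =>
          k ≤ (tripleInterCard A t.1 t.2.1 t.2.2 : ℝ)).card : ℝ)
        ≤ C * d ^ 2 * (n : ℝ) ^ 2 * Real.log n / k ^ 3 := by
  refine ⟨12, by norm_num, fun n m A d k hn hA hm hd hSzT hk => ?_⟩
  have hlog : Real.log n = 2 * Real.log m := by
    rw [hn, Nat.cast_pow, Real.log_pow, Nat.cast_ofNat]
  calc _ ≤ d * m / k ^ 3 * ∑ s ∈ (A - A).filter (fun s => k ≤ (delta A A s : ℝ)),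
          (delta A A s : ℝ) ^ 3 := hA ▸ card_rich_triples_le hSzT hk
    _ ≤ d * m / k ^ 3 * (8 * (Nat.log 2 m + 1) * (d * m ^ 3)) := by
        gcongr
        exact hA ▸ sum_delta_cube_le hSzT hk
    _ ≤ d * m / k ^ 3 * (8 * (3 * Real.log m) * (d * m ^ 3)) := by
        gcongr
        exact natLog_two_add_one_le_three_mul_log hm
    _ = 12 * d ^ 2 * (n : ℝ) ^ 2 * Real.log n / k ^ 3 := by
        rw [hlog, hn]
        push_cast
        ring
end

section
/- Let A ⊂ ℝ be a finite set with |A| = n^{1/2} (n a perfect square) that is of SzT-type with parameter α = 2 and coefficient d > 0, and let k ≥ 1 be real. Then there is an absolute constant C > 0 such that the number of points (a,b) ∈ A² for which the line (a,b) + ℝ(1,1) contains at least k points of A² is at most C · d · n^{3/2} / k². -/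
open scoped Pointwise Classical

/-! A pair `p ∈ X × Y` lies on the diagonal line through `q` iff `p.1 - p.2 = q.1 - q.2`, so the
richness of the line through `p` is `δ_{X,Y}(p.1 - p.2)`. Grouping rich pairs by their difference
gives `∑_{δ(s) ≥ k} δ(s)`, which by the layer-cake formula is `∑_t #{s : δ(s) ≥ max k (t + 1)}`.
The Szemerédi–Trotter bound makes the `t`-th layer at most `d |X| |Y|² / max k (t + 1) ^ 3`, and
`∑_t 1 / max k (t + 1) ^ 3 ≤ 4 / k²` by comparison with a telescoping series. -/

open Finset

theorem card_filter_diagonal_eq_delta (X Y : Finset ℝ) (p : ℝ × ℝ) :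
    ((X ×ˢ Y).filter fun q => ∃ t : ℝ, q.1 = p.1 + t ∧ q.2 = p.2 + t).card
      = delta X Y (p.1 - p.2) := by
  unfold delta
  congr 1
  refine filter_congr fun q _ => ⟨?_, fun h => ⟨q.1 - p.1, by ring, by linarith⟩⟩
  rintro ⟨t, h₁, h₂⟩
  rw [h₁, h₂]
  ring

theorem card_filter_le_delta_eq_sum (X Y : Finset ℝ) (k : ℝ) :
    ((X ×ˢ Y).filter fun p => k ≤ (delta X Y (p.1 - p.2) : ℝ)).card
      = ∑ s ∈ (X - Y).filter (fun s => k ≤ (delta X Y s : ℝ)), delta X Y s := by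
  rw [card_eq_sum_card_fiberwise (f := fun p => p.1 - p.2)]
  · refine sum_congr rfl fun s hs => ?_
    rw [delta, filter_filter]
    refine congrArg card (filter_congr fun p _ => ⟨And.right, fun h => ⟨?_, h⟩⟩)
    rw [h]
    exact (mem_filter.1 hs).2
  · intro p hp
    simp only [coe_filter, mem_product, Set.mem_ofPred_eq] at hp
    exact mem_filter.2 ⟨sub_mem_sub hp.1.1 hp.1.2, hp.2⟩

theorem sum_eq_sum_range_card_filter_lt {ι : Type*} (S : Finset ι) (f : ι → ℕ) :
    ∑ s ∈ S, f s = ∑ t ∈ range (S.sup f), (S.filter fun s => t < f s).card := by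
  simp only [card_filter]
  rw [sum_comm]
  refine sum_congr rfl fun s hs => ?_
  rw [← card_filter]
  have : (range (S.sup f)).filter (fun t => t < f s) = range (f s) := by
    ext t
    simp only [mem_filter, mem_range, and_iff_right_iff_imp]
    exact fun ht => ht.trans_le (le_sup hs)
  rw [this, card_range]

theorem card_filter_delta_le_of_szTType2 {X : Finset ℝ} {d : ℝ} (hX : SzTType2 X d)
    (Y : Finset ℝ) (k : ℝ) (t : ℕ) :
    ((((X - Y).filter fun s => k ≤ (delta X Y s : ℝ)).filter fun s => t < delta X Y s).card : ℝ)
      ≤ d * X.card * (Y.card : ℝ) ^ 2 / max k (t + 1) ^ 3 := by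
  refine le_trans ?_ (hX Y _ (le_max_of_le_right (by simp)))
  gcongr
  intro s hs
  simp only [mem_filter] at hs ⊢
  exact ⟨hs.1.1, max_le hs.1.2 (by exact_mod_cast hs.2)⟩

theorem inv_max_pow_three_le {k : ℝ} (hk : 0 < k) {t : ℝ} (ht : 0 ≤ t) :
    (max k (t + 1) ^ 3)⁻¹ ≤ 4 / k * ((k + t)⁻¹ - (k + t + 1)⁻¹) := by
  set τ := max k (t + 1)
  have hkτ : k ≤ τ := le_max_left _ _
  have htτ : t + 1 ≤ τ := le_max_right _ _
  have hτ : 0 < τ := hk.trans_le hkτ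
  have htelescope : (k + t)⁻¹ - (k + t + 1)⁻¹ = ((k + t) * (k + t + 1))⁻¹ := by
    field_simp
    ring
  have hprod : k * ((k + t) * (k + t + 1)) ≤ 4 * τ ^ 3 := by
    calc k * ((k + t) * (k + t + 1)) ≤ τ * ((2 * τ) * (2 * τ)) := by
          gcongr <;> linarith
      _ = 4 * τ ^ 3 := by ring
  calc (τ ^ 3)⁻¹ = 4 / (4 * τ ^ 3) := by field_simp
    _ ≤ 4 / (k * ((k + t) * (k + t + 1))) := by gcongr
    _ = 4 / k * ((k + t)⁻¹ - (k + t + 1)⁻¹) := by rw [htelescope]; field_simp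

theorem sum_range_inv_max_pow_three_le {k : ℝ} (hk : 0 < k) (N : ℕ) :
    ∑ t ∈ range N, (max k ((t : ℝ) + 1) ^ 3)⁻¹ ≤ 4 / k ^ 2 := by
  calc ∑ t ∈ range N, (max k ((t : ℝ) + 1) ^ 3)⁻¹
      ≤ ∑ t ∈ range N, 4 / k * ((k + t)⁻¹ - (k + (t + 1 : ℕ))⁻¹) :=
        sum_le_sum fun t _ => by
          rw [Nat.cast_succ, ← add_assoc]
          exact inv_max_pow_three_le hk t.cast_nonneg
    _ = 4 / k * (k⁻¹ - (k + N)⁻¹) := by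
        rw [← mul_sum, sum_range_sub' (fun i : ℕ => (k + i)⁻¹), Nat.cast_zero, add_zero]
    _ ≤ 4 / k * k⁻¹ := by
        gcongr
        exact sub_le_self _ (inv_nonneg.2 (by positivity))
    _ = 4 / k ^ 2 := by ring

theorem card_rich_diagonal_pairs_le {X : Finset ℝ} {d : ℝ} (hX : SzTType2 X d) (hd : 0 ≤ d)
    (Y : Finset ℝ) {k : ℝ} (hk : 0 < k) :
    (((X ×ˢ Y).filter fun p => k ≤ (delta X Y (p.1 - p.2) : ℝ)).card : ℝ)
      ≤ 4 * d * X.card * (Y.card : ℝ) ^ 2 / k ^ 2 := by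
  set S := (X - Y).filter fun s => k ≤ (delta X Y s : ℝ)
  rw [card_filter_le_delta_eq_sum, sum_eq_sum_range_card_filter_lt, Nat.cast_sum]
  calc ∑ t ∈ range (S.sup (delta X Y)), ((S.filter fun s => t < delta X Y s).card : ℝ)
      ≤ ∑ t ∈ range (S.sup (delta X Y)), d * X.card * (Y.card : ℝ) ^ 2 / max k (t + 1) ^ 3 :=
        sum_le_sum fun t _ => card_filter_delta_le_of_szTType2 hX Y k t
    _ = d * X.card * (Y.card : ℝ) ^ 2 * ∑ t ∈ range (S.sup (delta X Y)), (max k (t + 1) ^ 3)⁻¹ := by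
        simp only [div_eq_mul_inv, mul_sum]
    _ ≤ d * X.card * (Y.card : ℝ) ^ 2 * (4 / k ^ 2) := by
        gcongr
        exact sum_range_inv_max_pow_three_le hk _
    _ = 4 * d * X.card * (Y.card : ℝ) ^ 2 / k ^ 2 := by ring

theorem rich_diagonal_lines_in_grid :
    ∃ C : ℝ, 0 < C ∧ ∀ (n m : ℕ) (A : Finset ℝ) (d k : ℝ),
      n = m ^ 2 → A.card = m → 0 < d → SzTType2 A d → 1 ≤ k →
      (((A ×ˢ A).filter fun p =>
          k ≤ (((A ×ˢ A).filter fun q =>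
            ∃ t : ℝ, q.1 = p.1 + t ∧ q.2 = p.2 + t).card : ℝ)).card : ℝ)
        ≤ C * d * (n : ℝ) ^ ((3 : ℝ) / 2) / k ^ 2 := by
  refine ⟨4, by norm_num, fun n m A d k hn hm hd hA hk => ?_⟩
  have hn32 : (n : ℝ) ^ ((3 : ℝ) / 2) = (m : ℝ) ^ 3 := by
    rw [hn, Nat.cast_pow, ← Real.rpow_natCast, ← Real.rpow_mul m.cast_nonneg]
    norm_num
  simp only [card_filter_diagonal_eq_delta]
  rw [hn32, ← hm, pow_succ', ← mul_assoc]
  exact card_rich_diagonal_pairs_le hA hd.le A (by linarith)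
end
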